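/- Let p(a₁,a₂|x₁,x₂) be a non-signalling bipartite conditional probability distribution and let p', defined by the Theorem 1 construction p'(a₁,a₂|x₁,x₂) = ∑_{λ₁,λ₂} p̃₁(a₁|x₁,λ₁)·p̃₂(a₂|x₂,λ₂)·q(λ₁,λ₂) with q((a₁',x₁'),(a₂',x₂')) = p(a₁',a₂'|x₁',x₂')/(X₁X₂) and p̃ₖ as the quasi-deterministic distributions of that construction. Then for all a₁ < A₁−1 and a₂ < A₂−1: p'(a₁,a₂|x₁,x₂) = p(a₁,a₂|x₁,x₂), and the one-party marginals agree: ∑_{a₂} p'(a₁,a₂|x₁,x₂) = ∑_{a₂} p(a₁,a₂|x₁,x₂) for a₁ < A₁−1, and symmetrically. -/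

import Mathlib

/-- The quasi-deterministic local measurement distribution of Theorem 1. -/
def qmeas (A X : ℕ) (a : Fin A) (x : Fin X) (lam : Fin A × Fin X) : ℝ :=
  if (a : ℕ) < A - 1 then (if lam = (a, x) then (X : ℝ) else 0)
  else 1 - ∑ a' : Fin A,
    (if (a' : ℕ) < A - 1 then (if lam = (a', x) then (X : ℝ) else 0) else 0)

/-!
The quasi-deterministic response `qmeas a x` with `a < A - 1` is `X` times the point mass at
`(a, x)`, and the last outcome absorbs the remaining weight, so `∑ₐ qmeas a x λ = 1`. Hence
in the local model `p'` the pair `(a₁, a₂)` with both outcomes non-final picks out the single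
hidden variable `((a₁, x₁), (a₂, x₂))`, whose weight `p(a₁, a₂|x₁, x₂) / (X₁ X₂)` is rescaled
by `X₁ X₂`. Summing `p'` over `a₂` removes the second response and leaves the average of
`p(a₁, ·|x₁, x₂')` over `x₂'`, which by non-signalling is the marginal at `x₂`.
-/

lemma sum_qmeas_mul_of_lt {A X : ℕ} {a : Fin A} (x : Fin X) (h : (a : ℕ) < A - 1)
    (f : Fin A × Fin X → ℝ) :
    ∑ lam, qmeas A X a x lam * f lam = X * f (a, x) := by
  simp [qmeas, if_pos h]

lemma sum_qmeas {A X : ℕ} (x : Fin X) (lam : Fin A × Fin X) :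
    ∑ a, qmeas A X a x lam = 1 := by
  obtain ⟨n, rfl⟩ : ∃ n, A = n + 1 := Nat.exists_eq_add_one.mpr lam.1.pos
  simp [qmeas, Fin.sum_univ_castSucc]

lemma sum_sum_qmeas_mul {A X : ℕ} (x : Fin X) (f : Fin A × Fin X → ℝ) :
    ∑ a, ∑ lam, qmeas A X a x lam * f lam = ∑ lam, f lam := by
  rw [Finset.sum_comm]
  simp_rw [← Finset.sum_mul, sum_qmeas, one_mul]

lemma sum_prod_eq_card_mul_of_sum_const {α β : Type*} [Fintype α] [Fintype β]
    (f : α → β → ℝ) (hf : ∀ b b', ∑ a, f a b = ∑ a, f a b') (b : β) :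
    ∑ ab : α × β, f ab.1 ab.2 = Fintype.card β * ∑ a, f a b := by
  rw [Fintype.sum_prod_type, Finset.sum_comm, Finset.sum_congr rfl fun b' _ => hf b' b,
    Finset.sum_const, Finset.card_univ, nsmul_eq_mul]

section LocalModel

variable {A₁ A₂ X₁ X₂ : ℕ}

/-- The distribution `p'` of Theorem 1. -/
noncomputable def localModel (p : Fin A₁ → Fin A₂ → Fin X₁ → Fin X₂ → ℝ)
    (a₁ : Fin A₁) (a₂ : Fin A₂) (x₁ : Fin X₁) (x₂ : Fin X₂) : ℝ :=
  ∑ l₁ : Fin A₁ × Fin X₁, ∑ l₂ : Fin A₂ × Fin X₂,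
    qmeas A₁ X₁ a₁ x₁ l₁ * qmeas A₂ X₂ a₂ x₂ l₂ *
      (p l₁.1 l₂.1 l₁.2 l₂.2 / ((X₁ : ℝ) * (X₂ : ℝ)))

lemma localModel_swap (p : Fin A₁ → Fin A₂ → Fin X₁ → Fin X₂ → ℝ)
    (a₁ : Fin A₁) (a₂ : Fin A₂) (x₁ : Fin X₁) (x₂ : Fin X₂) :
    localModel (fun a₂ a₁ x₂ x₁ => p a₁ a₂ x₁ x₂) a₂ a₁ x₂ x₁ = localModel p a₁ a₂ x₁ x₂ := by
  rw [localModel, Finset.sum_comm]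
  exact Finset.sum_congr rfl fun _ _ => Finset.sum_congr rfl fun _ _ => by ring

lemma localModel_of_lt (p : Fin A₁ → Fin A₂ → Fin X₁ → Fin X₂ → ℝ)
    {a₁ : Fin A₁} {a₂ : Fin A₂} (x₁ : Fin X₁) (x₂ : Fin X₂)
    (h₁ : (a₁ : ℕ) < A₁ - 1) (h₂ : (a₂ : ℕ) < A₂ - 1) :
    localModel p a₁ a₂ x₁ x₂ = p a₁ a₂ x₁ x₂ := by
  have hX₁ : (X₁ : ℝ) ≠ 0 := Nat.cast_ne_zero.mpr x₁.pos.ne'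
  have hX₂ : (X₂ : ℝ) ≠ 0 := Nat.cast_ne_zero.mpr x₂.pos.ne'
  simp_rw [localModel, mul_assoc, ← Finset.mul_sum, sum_qmeas_mul_of_lt x₂ h₂,
    sum_qmeas_mul_of_lt x₁ h₁]
  field_simp

lemma sum_localModel_right (p : Fin A₁ → Fin A₂ → Fin X₁ → Fin X₂ → ℝ)
    (hNS : ∀ a₁ x₁ x₂ x₂', ∑ a₂, p a₁ a₂ x₁ x₂ = ∑ a₂, p a₁ a₂ x₁ x₂')
    {a₁ : Fin A₁} (x₁ : Fin X₁) (x₂ : Fin X₂) (h₁ : (a₁ : ℕ) < A₁ - 1) :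
    ∑ a₂, localModel p a₁ a₂ x₁ x₂ = ∑ a₂, p a₁ a₂ x₁ x₂ := by
  have hX₁ : (X₁ : ℝ) ≠ 0 := Nat.cast_ne_zero.mpr x₁.pos.ne'
  have hX₂ : (X₂ : ℝ) ≠ 0 := Nat.cast_ne_zero.mpr x₂.pos.ne'
  calc ∑ a₂, localModel p a₁ a₂ x₁ x₂
      = ∑ l₁, qmeas A₁ X₁ a₁ x₁ l₁ *
          ∑ l₂ : Fin A₂ × Fin X₂, p l₁.1 l₂.1 l₁.2 l₂.2 / ((X₁ : ℝ) * (X₂ : ℝ)) := by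
        simp_rw [localModel, mul_assoc, ← Finset.mul_sum]
        rw [Finset.sum_comm]
        simp_rw [← Finset.mul_sum, sum_sum_qmeas_mul]
    _ = X₁ * (∑ l₂ : Fin A₂ × Fin X₂, p a₁ l₂.1 x₁ l₂.2) / ((X₁ : ℝ) * (X₂ : ℝ)) := by
        rw [sum_qmeas_mul_of_lt x₁ h₁, ← Finset.sum_div, mul_div_assoc]
    _ = ∑ a₂, p a₁ a₂ x₁ x₂ := by
        rw [sum_prod_eq_card_mul_of_sum_const (fun a₂ x₂ => p a₁ a₂ x₁ x₂) (hNS a₁ x₁) x₂,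
          Fintype.card_fin]
        field_simp

end LocalModel

theorem stmt17_general {A₁ A₂ X₁ X₂ : ℕ}
    (p : Fin A₁ → Fin A₂ → Fin X₁ → Fin X₂ → ℝ)
    (hNS2 : ∀ a₁ x₁ x₂ x₂', ∑ a₂, p a₁ a₂ x₁ x₂ = ∑ a₂, p a₁ a₂ x₁ x₂')
    (hNS1 : ∀ a₂ x₂ x₁ x₁', ∑ a₁, p a₁ a₂ x₁ x₂ = ∑ a₁, p a₁ a₂ x₁' x₂)
    (p' : Fin A₁ → Fin A₂ → Fin X₁ → Fin X₂ → ℝ)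
    (hp' : ∀ a₁ a₂ x₁ x₂, p' a₁ a₂ x₁ x₂ =
      ∑ l₁ : Fin A₁ × Fin X₁, ∑ l₂ : Fin A₂ × Fin X₂,
        qmeas A₁ X₁ a₁ x₁ l₁ * qmeas A₂ X₂ a₂ x₂ l₂ *
          (p l₁.1 l₂.1 l₁.2 l₂.2 / ((X₁ : ℝ) * (X₂ : ℝ)))) :
    (∀ (a₁ : Fin A₁) (a₂ : Fin A₂) (x₁ : Fin X₁) (x₂ : Fin X₂), (a₁ : ℕ) < A₁ - 1 → (a₂ : ℕ) < A₂ - 1 →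
      p' a₁ a₂ x₁ x₂ = p a₁ a₂ x₁ x₂) ∧
    (∀ (a₁ : Fin A₁) (x₁ : Fin X₁) (x₂ : Fin X₂), (a₁ : ℕ) < A₁ - 1 →
      ∑ a₂, p' a₁ a₂ x₁ x₂ = ∑ a₂, p a₁ a₂ x₁ x₂) ∧
    (∀ (a₂ : Fin A₂) (x₂ : Fin X₂) (x₁ : Fin X₁), (a₂ : ℕ) < A₂ - 1 →
      ∑ a₁, p' a₁ a₂ x₁ x₂ = ∑ a₁, p a₁ a₂ x₁ x₂) := by
  obtain rfl : p' = localModel p := by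
    funext a₁ a₂ x₁ x₂
    exact hp' a₁ a₂ x₁ x₂
  refine ⟨fun a₁ a₂ x₁ x₂ h₁ h₂ => localModel_of_lt p x₁ x₂ h₁ h₂,
    fun a₁ x₁ x₂ h₁ => sum_localModel_right p hNS2 x₁ x₂ h₁, fun a₂ x₂ x₁ h₂ => ?_⟩
  simpa only [localModel_swap] using
    sum_localModel_right (fun a₂ a₁ x₂ x₁ => p a₁ a₂ x₁ x₂) hNS1 x₂ x₁ h₂

/-- The Theorem 1 construction reproduces the restricted values and one-party
marginals of the original non-signalling distribution. -/
theorem stmt17 {A₁ A₂ X₁ X₂ : ℕ}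
    (p : Fin A₁ → Fin A₂ → Fin X₁ → Fin X₂ → ℝ)
    (hp0 : ∀ a₁ a₂ x₁ x₂, 0 ≤ p a₁ a₂ x₁ x₂)
    (hnorm : ∀ x₁ x₂, ∑ a₁, ∑ a₂, p a₁ a₂ x₁ x₂ = 1)
    (hNS2 : ∀ a₁ x₁ x₂ x₂', ∑ a₂, p a₁ a₂ x₁ x₂ = ∑ a₂, p a₁ a₂ x₁ x₂')
    (hNS1 : ∀ a₂ x₂ x₁ x₁', ∑ a₁, p a₁ a₂ x₁ x₂ = ∑ a₁, p a₁ a₂ x₁' x₂)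
    (p' : Fin A₁ → Fin A₂ → Fin X₁ → Fin X₂ → ℝ)
    (hp' : ∀ a₁ a₂ x₁ x₂, p' a₁ a₂ x₁ x₂ =
      ∑ l₁ : Fin A₁ × Fin X₁, ∑ l₂ : Fin A₂ × Fin X₂,
        qmeas A₁ X₁ a₁ x₁ l₁ * qmeas A₂ X₂ a₂ x₂ l₂ *
          (p l₁.1 l₂.1 l₁.2 l₂.2 / ((X₁ : ℝ) * (X₂ : ℝ)))) :
    (∀ (a₁ : Fin A₁) (a₂ : Fin A₂) (x₁ : Fin X₁) (x₂ : Fin X₂), (a₁ : ℕ) < A₁ - 1 → (a₂ : ℕ) < A₂ - 1 →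
      p' a₁ a₂ x₁ x₂ = p a₁ a₂ x₁ x₂) ∧
    (∀ (a₁ : Fin A₁) (x₁ : Fin X₁) (x₂ : Fin X₂), (a₁ : ℕ) < A₁ - 1 →
      ∑ a₂, p' a₁ a₂ x₁ x₂ = ∑ a₂, p a₁ a₂ x₁ x₂) ∧
    (∀ (a₂ : Fin A₂) (x₂ : Fin X₂) (x₁ : Fin X₁), (a₂ : ℕ) < A₂ - 1 →
      ∑ a₁, p' a₁ a₂ x₁ x₂ = ∑ a₁, p a₁ a₂ x₁ x₂) :=
  stmt17_general p hNS2 hNS1 p' hp'
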